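/- arXiv:2101.02586 — 7 statements merged into one kernel-verified Lean document; each statement's English description precedes it below -/
import Mathlib

section
/- Let M be an n × n integer matrix such that every diagonal entry is ≥ -1, every off-diagonal entry is ≥ 0, and every row sum equals 1. Then there exists a nonempty set of rows of M whose sum is a nonzero vector with all entries in {0, 1}. -/
/-!
Induct on the set `s` of indices still in play, keeping every row sum over `s` equal to `1`.
If some diagonal entry `M v v` is nonnegative, the single row `v` works. Otherwise every diagonal
entry is `-1`; if moreover every column sum over `s` is at least `1`, double counting forces them
all to be `1` and all of `s` works. Otherwise some column `u` has off-diagonal sum `0` or `1`, and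
we drop the index `u`. In the second case the off-diagonal mass of column `u` is a single unit in
some row `x`, which we move to a positive entry `M x y` of the same row so that row sums stay `1`.
A solution of the smaller problem solves the original one: column `u` collects at most `1`, and
the extra unit at `(x, y)` is harmless because a set of rows containing `x` has column sum at `y`
at least `M x y - 1 ≥ 0`.
-/

open Finset

variable {α : Type*}

theorem Finset.exists_eq_ite_of_sum_eq_one [DecidableEq α] {t : Finset α} {f : α → ℤ}
    (hf : ∀ i ∈ t, 0 ≤ f i) (h : ∑ i ∈ t, f i = 1) :
    ∃ x ∈ t, ∀ i ∈ t, f i = if i = x then 1 else 0 := by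
  obtain ⟨x, hx, hfx⟩ : ∃ x ∈ t, 0 < f x := by
    by_contra! hneg
    have := sum_nonpos hneg
    omega
  have hrest : ∑ i ∈ t.erase x, f i = 0 := by
    have := sum_nonneg fun i (hi : i ∈ t.erase x) => hf i (mem_of_mem_erase hi)
    rw [sum_erase_eq_sub hx] at this ⊢
    have := single_le_sum hf hx
    omega
  refine ⟨x, hx, fun i hi => ?_⟩
  split_ifs with hix
  · subst hix
    rw [← add_sum_erase t f hx, hrest] at h
    omega
  · exact (sum_eq_zero_iff_of_nonneg fun i hi => hf i (mem_of_mem_erase hi)).1 hrest i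
      (mem_erase.2 ⟨hix, hi⟩)

structure IsAlmostNonneg (M : Matrix α α ℤ) : Prop where
  neg_one_le_diag : ∀ i, -1 ≤ M i i
  nonneg_of_ne : ∀ i j, i ≠ j → 0 ≤ M i j

def IsZeroOneRowSet (M : Matrix α α ℤ) (s T : Finset α) : Prop :=
  T ⊆ s ∧ T.Nonempty ∧ ∀ j ∈ s, ∑ i ∈ T, M i j = 0 ∨ ∑ i ∈ T, M i j = 1

namespace IsAlmostNonneg

variable {M : Matrix α α ℤ}

theorem neg_one_le_sum_col [DecidableEq α] (hM : IsAlmostNonneg M) (T : Finset α) (j : α) :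
    -1 ≤ ∑ i ∈ T, M i j := by
  calc -1 ≤ ∑ i ∈ T, if i = j then (-1 : ℤ) else 0 := by
        rw [sum_ite_eq' T j]
        split_ifs <;> norm_num
    _ ≤ ∑ i ∈ T, M i j := sum_le_sum fun i _ => by
        split_ifs with hij
        · exact hij ▸ hM.neg_one_le_diag i
        · exact hM.nonneg_of_ne i j hij

theorem add_single [DecidableEq α] {x y : α} (hM : IsAlmostNonneg M) :
    IsAlmostNonneg (M + Matrix.single x y 1) where
  neg_one_le_diag i := by
    have := hM.neg_one_le_diag i
    simp only [Matrix.add_apply, Matrix.single_apply]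
    split_ifs <;> omega
  nonneg_of_ne i j hij := by
    have := hM.nonneg_of_ne i j hij
    simp only [Matrix.add_apply, Matrix.single_apply]
    split_ifs <;> omega

end IsAlmostNonneg

section ZeroOneRowSet

variable {M : Matrix α α ℤ} {s T : Finset α}

theorem isZeroOneRowSet_singleton (hM : IsAlmostNonneg M) {v : α} (hv : v ∈ s)
    (hrow : ∑ j ∈ s, M v j = 1) (hvv : 0 ≤ M v v) : IsZeroOneRowSet M s {v} := by
  have hnonneg : ∀ j ∈ s, 0 ≤ M v j := fun j _ => by
    rcases eq_or_ne v j with rfl | hvj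
    exacts [hvv, hM.nonneg_of_ne v j hvj]
  refine ⟨singleton_subset_iff.2 hv, singleton_nonempty v, fun j hj => ?_⟩
  have := single_le_sum hnonneg hj
  have := hnonneg j hj
  rw [sum_singleton]
  omega

theorem sum_col_eq_one_of_one_le (hrow : ∀ i ∈ s, ∑ j ∈ s, M i j = 1)
    (hcol : ∀ j ∈ s, 1 ≤ ∑ i ∈ s, M i j) : ∀ j ∈ s, ∑ i ∈ s, M i j = 1 := by
  refine fun j hj => ((sum_eq_sum_iff_of_le hcol).1 ?_ j hj).symm
  rw [sum_comm, sum_congr rfl hrow]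

theorem isZeroOneRowSet_self (hs : s.Nonempty) (hrow : ∀ i ∈ s, ∑ j ∈ s, M i j = 1)
    (hcol : ∀ j ∈ s, 1 ≤ ∑ i ∈ s, M i j) : IsZeroOneRowSet M s s :=
  ⟨subset_rfl, hs, fun j hj => Or.inr (sum_col_eq_one_of_one_le hrow hcol j hj)⟩

theorem IsZeroOneRowSet.of_erase [DecidableEq α] (hM : IsAlmostNonneg M) {u : α}
    (hT : IsZeroOneRowSet M (s.erase u) T) (hu : ∑ i ∈ s.erase u, M i u ≤ 1) :
    IsZeroOneRowSet M s T := by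
  obtain ⟨hTs, hTne, hT01⟩ := hT
  have hnonneg : ∀ i ∈ s.erase u, 0 ≤ M i u := fun i hi =>
    hM.nonneg_of_ne i u (ne_of_mem_erase hi)
  refine ⟨hTs.trans (erase_subset u s), hTne, fun j hj => ?_⟩
  rcases eq_or_ne j u with rfl | hju
  · have := sum_le_sum_of_subset_of_nonneg hTs fun i hi _ => hnonneg i hi
    have := sum_nonneg fun i hi => hnonneg i (hTs hi)
    omega
  · exact hT01 j (mem_erase.2 ⟨hju, hj⟩)

theorem sum_col_add_single [DecidableEq α] (x y j : α) :
    ∑ i ∈ T, (M + Matrix.single x y (1 : ℤ)) i j =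
      ∑ i ∈ T, M i j + if x ∈ T ∧ y = j then 1 else 0 := by
  simp [Matrix.single_apply, ite_and, sum_add_distrib, sum_ite_eq]

theorem sum_row_add_single [DecidableEq α] (x y i : α) (t : Finset α) :
    ∑ j ∈ t, (M + Matrix.single x y (1 : ℤ)) i j =
      ∑ j ∈ t, M i j + if x = i ∧ y ∈ t then 1 else 0 := by
  simp [Matrix.single_apply, ite_and, sum_add_distrib, sum_ite_eq]

theorem IsZeroOneRowSet.of_add_single [DecidableEq α] (hM : IsAlmostNonneg M) {x y : α}
    (hMxy : 1 ≤ M x y) (hT : IsZeroOneRowSet (M + Matrix.single x y 1) s T) :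
    IsZeroOneRowSet M s T := by
  obtain ⟨hTs, hTne, hT01⟩ := hT
  refine ⟨hTs, hTne, fun j hj => ?_⟩
  have h01 := hT01 j hj
  rw [sum_col_add_single] at h01
  split_ifs at h01 with h
  · obtain ⟨hxT, rfl⟩ := h
    have := hM.neg_one_le_sum_col (T.erase x) y
    rw [← add_sum_erase T _ hxT] at h01 ⊢
    omega
  · simpa using h01

theorem exists_add_single_sum_row_eq_one [DecidableEq α] (hM : IsAlmostNonneg M) {u : α}
    (hu : u ∉ s) (hdiag : ∀ v ∈ s, M v v = -1)
    (hrow : ∀ i ∈ s, ∑ j ∈ s, M i j + M i u = 1) (hcol : ∑ i ∈ s, M i u = 1) :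
    ∃ x y, 1 ≤ M x y ∧
      ∀ i ∈ s, ∑ j ∈ s, (M + Matrix.single x y (1 : ℤ)) i j = 1 := by
  have hnonneg : ∀ i ∈ s, 0 ≤ M i u := fun i hi =>
    hM.nonneg_of_ne i u (ne_of_mem_of_not_mem hi hu)
  obtain ⟨x, hx, hxcol⟩ := exists_eq_ite_of_sum_eq_one hnonneg hcol
  obtain ⟨y, hy, hxy⟩ : ∃ y ∈ s, 1 ≤ M x y := by
    by_contra! h
    have hxrow := hrow x hx
    rw [← add_sum_erase _ _ hx, hdiag x hx, hxcol x hx, if_pos rfl] at hxrow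
    have : ∑ j ∈ s.erase x, M x j ≤ 0 := sum_nonpos fun j hj => by
      have := h j (mem_of_mem_erase hj)
      omega
    omega
  refine ⟨x, y, hxy, fun i hi => ?_⟩
  have hirow := hrow i hi
  rw [hxcol i hi] at hirow
  rw [sum_row_add_single]
  by_cases hix : i = x
  · rw [if_pos hix] at hirow
    rw [if_pos ⟨hix.symm, hy⟩]
    omega
  · rw [if_neg hix] at hirow
    rw [if_neg fun h => hix h.1.symm]
    omega

theorem exists_isZeroOneRowSet [DecidableEq α] (hM : IsAlmostNonneg M) (hs : s.Nonempty)
    (hrow : ∀ i ∈ s, ∑ j ∈ s, M i j = 1) : ∃ T, IsZeroOneRowSet M s T := by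
  induction s using Finset.strongInduction generalizing M with
  | H s ih =>
  by_cases hloop : ∃ v ∈ s, 0 ≤ M v v
  · obtain ⟨v, hv, hvv⟩ := hloop
    exact ⟨{v}, isZeroOneRowSet_singleton hM hv (hrow v hv) hvv⟩
  by_cases hcol : ∀ j ∈ s, 1 ≤ ∑ i ∈ s, M i j
  · exact ⟨s, isZeroOneRowSet_self hs hrow hcol⟩
  push Not at hloop hcol
  obtain ⟨u, hu, hcolu⟩ := hcol
  have hdiag : ∀ v ∈ s, M v v = -1 := fun v hv => by
    have := hM.neg_one_le_diag v
    have := hloop v hv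
    omega
  have hrow' : ∀ i ∈ s.erase u, ∑ j ∈ s.erase u, M i j + M i u = 1 := fun i hi => by
    rw [sum_erase_add _ _ hu, hrow i (mem_of_mem_erase hi)]
  have hcolu' : ∑ i ∈ s.erase u, M i u ≤ 1 := by
    rw [sum_erase_eq_sub hu, hdiag u hu]
    omega
  have hne : (s.erase u).Nonempty := by
    by_contra h
    have := hrow u hu
    rw [← add_sum_erase s _ hu, not_nonempty_iff_eq_empty.1 h, sum_empty, hdiag u hu] at this
    omega
  suffices ∃ T, IsZeroOneRowSet M (s.erase u) T from this.imp fun T hT => hT.of_erase hM hcolu'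
  have hnonneg : ∀ i ∈ s.erase u, 0 ≤ M i u := fun i hi =>
    hM.nonneg_of_ne i u (ne_of_mem_erase hi)
  obtain hsource | hpendant :
      ∑ i ∈ s.erase u, M i u = 0 ∨ ∑ i ∈ s.erase u, M i u = 1 := by
    have := sum_nonneg hnonneg
    omega
  · have hzero := (sum_eq_zero_iff_of_nonneg hnonneg).1 hsource
    exact ih _ (erase_ssubset hu) hM hne fun i hi => by simpa [hzero i hi] using hrow' i hi
  · obtain ⟨x, y, hxy, hrow''⟩ := exists_add_single_sum_row_eq_one hM (notMem_erase u s)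
      (fun v hv => hdiag v (mem_of_mem_erase hv)) hrow' hpendant
    exact (ih _ (erase_ssubset hu) hM.add_single hne hrow'').imp
      fun T hT => hT.of_add_single hM hxy

end ZeroOneRowSet

theorem sum_rows_ne_zero_of_sum_row_eq_one [Fintype α] {M : α → α → ℤ}
    (hrow : ∀ i, ∑ j, M i j = 1) {T : Finset α} (hT : T.Nonempty) :
    ∑ i ∈ T, M i ≠ 0 := by
  intro h
  have hcol : ∀ j, ∑ i ∈ T, M i j = 0 := fun j =>
    (Finset.sum_apply j T M).symm.trans (congrFun h j)
  have hcard : (#T : ℤ) = 0 :=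
    calc (#T : ℤ) = ∑ i ∈ T, ∑ j, M i j := by simp [hrow]
      _ = 0 := by rw [sum_comm]; simp [hcol]
  exact hT.card_pos.ne' (by exact_mod_cast hcard)

/-- Main lemma: for any matrix in `𝓜ₙ` some nonempty set of rows sums to a nonzero
zero-one vector. -/
theorem exists_rows_sum_zero_one {n : ℕ} (hn : 1 ≤ n) (M : Matrix (Fin n) (Fin n) ℤ)
    (hdiag : ∀ i, -1 ≤ M i i) (hoff : ∀ i j, i ≠ j → 0 ≤ M i j)
    (hrow : ∀ i, ∑ j, M i j = 1) :
    ∃ I : Finset (Fin n), I.Nonempty ∧ (∑ i ∈ I, M i) ≠ 0 ∧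
      ∀ j, (∑ i ∈ I, M i j) = 0 ∨ (∑ i ∈ I, M i j) = 1 := by
  have : Nonempty (Fin n) := ⟨⟨0, hn⟩⟩
  obtain ⟨I, -, hI, h01⟩ :=
    exists_isZeroOneRowSet ⟨hdiag, hoff⟩ univ_nonempty fun i _ => hrow i
  exact ⟨I, hI, sum_rows_ne_zero_of_sum_row_eq_one hrow hI, fun j => h01 j (mem_univ j)⟩
end

section
/- Let A be a finite, generating, sum-full, zero-sum-free subset of an abelian group G, and let H be a proper subgroup of G. Then there exist a_1, a_2, a_3, a_4 ∈ A \ H with a_1 + a_2 = a_3 + a_4 and {a_1, a_2} ≠ {a_3, a_4} (as unordered pairs). -/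
/-!
Suppose `B = A \ H` contains no nontrivial additive quadruple. Sum-fullness gives every `a ∈ B`
a partner `f a ∈ B` with `a - f a ∈ A`, and `f a ≠ a` because `0 ∉ A`. From
`a - f a = a' - f a'` we get `a + f a' = a' + f a`, so the absence of quadruples makes
`a ↦ a - f a` injective on `B`. On a nonempty `S ⊆ B` that `f` permutes, the distinct elements
`a - f a` of `A` then sum to `∑ a - ∑ f a = 0`, contradicting zero-sum-freeness; `B` is nonempty
because `A` generates `G` and `H` is proper.
-/

open Finset

theorem Finset.exists_nonempty_subset_image_eq_self {α : Type*} [DecidableEq α] (f : α → α)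
    {B : Finset α} (hB : B.Nonempty) (hf : ∀ a ∈ B, f a ∈ B) :
    ∃ S ⊆ B, S.Nonempty ∧ S.image f = S := by
  induction B using Finset.strongInduction with
  | H B ih =>
    have hsub : B.image f ⊆ B := image_subset_iff.mpr hf
    by_cases heq : B.image f = B
    · exact ⟨B, subset_rfl, hB, heq⟩
    obtain ⟨S, hS, hSne, hSf⟩ := ih _ (ssubset_of_subset_of_ne hsub heq) (hB.image f)
      fun a ha => mem_image_of_mem f (hsub ha)
    exact ⟨S, hS.trans hsub, hSne, hSf⟩

theorem Finset.sum_comp_eq_of_image_eq {α β : Type*} [DecidableEq α] [AddCommMonoid β]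
    {f : α → α} {S : Finset α} (hS : S.image f = S) (g : α → β) :
    ∑ a ∈ S, g (f a) = ∑ a ∈ S, g a := by
  conv_rhs => rw [← hS]
  rw [sum_image (injOn_of_card_image_eq (by rw [hS]))]

section

variable {G : Type*} [AddCommGroup G]

def ZeroSumFree (A : Finset G) : Prop :=
  ∀ S ⊆ A, S.Nonempty → ∑ x ∈ S, x ≠ 0

def IsSidon (B : Finset G) : Prop :=
  ∀ a₁ ∈ B, ∀ a₂ ∈ B, ∀ a₃ ∈ B, ∀ a₄ ∈ B,
    a₁ + a₂ = a₃ + a₄ → (a₁ = a₃ ∧ a₂ = a₄) ∨ (a₁ = a₄ ∧ a₂ = a₃)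

theorem ZeroSumFree.zero_notMem {A : Finset G} (hA : ZeroSumFree A) : (0 : G) ∉ A :=
  fun h => hA {0} (singleton_subset_iff.mpr h) (singleton_nonempty 0) (sum_singleton _ _)

theorem IsSidon.injOn_sub {B : Finset G} (hB : IsSidon B) {f : G → G}
    (hf : ∀ a ∈ B, f a ∈ B) (hfix : ∀ a ∈ B, f a ≠ a) :
    Set.InjOn (fun a => a - f a) B := by
  intro a ha a' ha' h
  rcases hB a ha (f a') (hf a' ha') a' ha' (f a) (hf a ha) (sub_eq_sub_iff_add_eq_add.mp h) with
    ⟨h, -⟩ | ⟨h, -⟩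
  · exact h
  · exact absurd h.symm (hfix a ha)

theorem ZeroSumFree.not_isSidon {A B : Finset G} (hA : ZeroSumFree A) (hB : B.Nonempty)
    (hstep : ∀ a ∈ B, ∃ b ∈ B, a - b ∈ A) : ¬IsSidon B := by
  classical
  intro hSidon
  choose! f hfB hfA using hstep
  have hfix : ∀ a ∈ B, f a ≠ a := fun a ha hfa =>
    hA.zero_notMem (by simpa [hfa] using hfA a ha)
  obtain ⟨S, hSB, hSne, hSf⟩ := exists_nonempty_subset_image_eq_self f hB hfB
  have hsum : ∑ x ∈ S.image (fun a => a - f a), x = 0 := by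
    rw [sum_image ((hSidon.injOn_sub hfB hfix).mono (by simpa using hSB)), sum_sub_distrib,
      sub_eq_zero]
    exact (sum_comp_eq_of_image_eq hSf id).symm
  refine hA _ ?_ (hSne.image _) hsum
  exact image_subset_iff.mpr fun a ha => hfA a (hSB ha)

variable {A : Finset G} {H : AddSubgroup G}

theorem exists_mem_notMem_of_closure_eq_top (hgen : AddSubgroup.closure (A : Set G) = ⊤)
    (hH : H ≠ ⊤) : ∃ a ∈ A, a ∉ H := by
  by_contra! h
  exact hH (eq_top_iff.mpr (hgen ▸ (AddSubgroup.closure_le H).mpr h))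

theorem exists_mem_notMem_sub_mem (hsf : ∀ a ∈ A, ∃ b ∈ A, ∃ c ∈ A, a = b + c)
    {a : G} (ha : a ∈ A) (haH : a ∉ H) : ∃ b ∈ A, b ∉ H ∧ a - b ∈ A := by
  obtain ⟨b, hb, c, hc, rfl⟩ := hsf a ha
  by_cases hbH : b ∈ H
  · exact ⟨c, hc, fun hcH => haH (H.add_mem hbH hcH), by simpa using hb⟩
  · exact ⟨b, hb, hbH, by simpa using hc⟩

end

/-- A finite generating sum-full zero-sum-free set has a nontrivial additive quadruple
outside any proper subgroup. -/
theorem exists_additive_quadruple_outside {G : Type*} [AddCommGroup G] (A : Finset G)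
    (hgen : AddSubgroup.closure (A : Set G) = ⊤)
    (hsf : ∀ a ∈ A, ∃ b ∈ A, ∃ c ∈ A, a = b + c)
    (hzsf : ∀ S ⊆ A, S.Nonempty → ∑ x ∈ S, x ≠ 0)
    (H : AddSubgroup G) (hH : H ≠ ⊤) :
    ∃ a₁ ∈ A, ∃ a₂ ∈ A, ∃ a₃ ∈ A, ∃ a₄ ∈ A,
      a₁ ∉ H ∧ a₂ ∉ H ∧ a₃ ∉ H ∧ a₄ ∉ H ∧ a₁ + a₂ = a₃ + a₄ ∧
      ¬((a₁ = a₃ ∧ a₂ = a₄) ∨ (a₁ = a₄ ∧ a₂ = a₃)) := by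
  classical
  set B := A.filter (· ∉ H)
  have hB : B.Nonempty := by
    obtain ⟨a, ha, haH⟩ := exists_mem_notMem_of_closure_eq_top hgen hH
    exact ⟨a, mem_filter.mpr ⟨ha, haH⟩⟩
  have hstep : ∀ a ∈ B, ∃ b ∈ B, a - b ∈ A := by
    intro a ha
    rw [mem_filter] at ha
    obtain ⟨b, hb, hbH, hab⟩ := exists_mem_notMem_sub_mem hsf ha.1 ha.2
    exact ⟨b, mem_filter.mpr ⟨hb, hbH⟩, hab⟩
  by_contra hnone
  refine ZeroSumFree.not_isSidon hzsf hB hstep fun a₁ h₁ a₂ h₂ a₃ h₃ a₄ h₄ hsum => ?_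
  simp only [B, mem_filter] at h₁ h₂ h₃ h₄
  by_contra hne
  exact hnone ⟨a₁, h₁.1, a₂, h₂.1, a₃, h₃.1, a₄, h₄.1, h₁.2, h₂.2, h₃.2, h₄.2, hsum, hne⟩
end

section
/- Let A be a finite nonempty subset of an elementary abelian 3-group (a vector space over 𝔽₃) such that every element of A is a sum of two other elements of A. Then A contains a nonempty subset summing to 0. -/
/-!
Suppose `A` is zero-sum-free and `SumsOutside A S`, i.e. `t = ∑ S` lies in `A \ S`. Writing
`t = u + v` with `u, v ∈ A`, such an `S` can always be replaced by a larger one, which is absurd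
as `A` is finite: if `u, v ∉ S` then `S ∪ {t, u, v}` sums to `3t = 0`; if only `u ∈ S` then
`(S \ {u}) ∪ {v, t}` sums to `u + 3v = u`; if `u, v ∈ S` then `S \ {u, v}` sums to `0`, so
`S = {u, v}`, and splitting `u = p + q` gives `{p, q, v}` with sum `t`, or a zero-sum triple when
`v ∈ {p, q}`. A first such set exists because `A` is nonempty and sum-full.
-/

open Finset

section

variable {G : Type*} [AddCommGroup G]

def SumFull (A : Finset G) : Prop :=
  ∀ a ∈ A, ∃ b ∈ A, ∃ c ∈ A, a = b + c

def SumsOutside (A S : Finset G) : Prop :=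
  S ⊆ A ∧ ∑ x ∈ S, x ∈ A ∧ ∑ x ∈ S, x ∉ S

namespace ZeroSumFree

variable {A S : Finset G} {a b c : G}

theorem eq_empty_of_sum_eq_zero (hfree : ZeroSumFree A) (hS : S ⊆ A) (h : ∑ x ∈ S, x = 0) :
    S = ∅ :=
  not_nonempty_iff_eq_empty.1 fun hne => hfree S hS hne h

theorem zero_notMem_s7 (hfree : ZeroSumFree A) : (0 : G) ∉ A := fun h =>
  hfree {0} (singleton_subset_iff.2 h) (singleton_nonempty 0) (sum_singleton id 0)

theorem left_ne_of_eq_add (hfree : ZeroSumFree A) (hc : c ∈ A) (h : a = b + c) : a ≠ b := by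
  rintro rfl
  exact hfree.zero_notMem_s7 (left_eq_add.1 h ▸ hc)

theorem right_ne_of_eq_add (hfree : ZeroSumFree A) (hb : b ∈ A) (h : a = b + c) : a ≠ c :=
  hfree.left_ne_of_eq_add hb (h.trans (add_comm b c))

theorem add_ne_zero (h3 : ∀ x : G, x + x + x = 0) (hfree : ZeroSumFree A) (ha : a ∈ A)
    (hb : b ∈ A) : a + b ≠ 0 := by
  classical
  intro h
  rcases eq_or_ne a b with rfl | hab
  · have ha0 : a = 0 := by simpa [h] using h3 a
    exact hfree.zero_notMem_s7 (ha0 ▸ ha)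
  · exact hfree {a, b} (insert_subset ha (singleton_subset_iff.2 hb)) (insert_nonempty _ _)
      (by rwa [sum_pair hab])

theorem ne_of_eq_add (h3 : ∀ x : G, x + x + x = 0) (hfree : ZeroSumFree A) (ha : a ∈ A)
    (hb : b ∈ A) (h : a = b + c) : b ≠ c := by
  rintro rfl
  exact hfree.add_ne_zero h3 ha hb (by rw [h, h3])

/-- Over `𝔽₃` the only vanishing sums `a + b + c` of elements of `A` are `a + a + a`. -/
theorem add_add_ne_zero (h3 : ∀ x : G, x + x + x = 0) (hfree : ZeroSumFree A) (ha : a ∈ A)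
    (hb : b ∈ A) (hc : c ∈ A) (hab : a ≠ b) : a + b + c ≠ 0 := by
  classical
  intro h
  by_cases hac : a = c
  · subst hac
    exact hab (sub_eq_zero.1 (by rw [show a - b = a + a + a - (a + b + a) by abel, h, h3, sub_zero]))
  by_cases hbc : b = c
  · subst hbc
    exact hab (sub_eq_zero.1 (by rw [show a - b = a + b + b - (b + b + b) by abel, h, h3, sub_zero]))
  refine hfree {a, b, c} ?_ (insert_nonempty _ _) ?_
  · simp [insert_subset_iff, ha, hb, hc]
  · rwa [sum_insert (by simp [hab, hac]), sum_pair hbc, ← add_assoc]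

theorem mem_or_mem_of_sum_eq_add (h3 : ∀ x : G, x + x + x = 0) (hfree : ZeroSumFree A)
    (hS : SumsOutside A S) {u v : G} (hu : u ∈ A) (hv : v ∈ A) (ht : ∑ x ∈ S, x = u + v) :
    u ∈ S ∨ v ∈ S := by
  classical
  obtain ⟨hSA, htA, htS⟩ := hS
  by_contra! huvS
  refine hfree (insert (∑ x ∈ S, x) (insert u (insert v S))) ?_ (insert_nonempty _ _) ?_
  · simp [insert_subset_iff, htA, hu, hv, hSA]
  · have huv := hfree.ne_of_eq_add h3 htA hu ht
    rw [sum_insert (by simp [hfree.left_ne_of_eq_add hv ht, hfree.right_ne_of_eq_add hu ht, htS]),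
      sum_insert (by simp [huv, huvS.1]), sum_insert huvS.2, ht,
      show u + v + (u + (v + (u + v))) = u + u + u + (v + v + v) by abel, h3, h3, add_zero]

theorem exists_card_lt_of_mem_of_notMem (h3 : ∀ x : G, x + x + x = 0) (hfree : ZeroSumFree A)
    (hS : SumsOutside A S) {u v : G} (hu : u ∈ S) (hvA : v ∈ A) (hv : v ∉ S)
    (ht : ∑ x ∈ S, x = u + v) : ∃ T, SumsOutside A T ∧ #S < #T := by
  classical
  obtain ⟨hSA, htA, htS⟩ := hS
  have huv := hfree.ne_of_eq_add h3 htA (hSA hu) ht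
  have hvS' : v ∉ S.erase u := fun h => hv (mem_of_mem_erase h)
  have htS' : ∑ x ∈ S, x ∉ insert v (S.erase u) := by
    rw [mem_insert, not_or]
    exact ⟨hfree.right_ne_of_eq_add (hSA hu) ht, fun h => htS (mem_of_mem_erase h)⟩
  have hsum : ∑ x ∈ insert (∑ x ∈ S, x) (insert v (S.erase u)), x = u := by
    rw [sum_insert htS', sum_insert hvS', sum_erase_eq_sub hu, ht,
      show u + v + (v + (u + v - u)) = u + (v + v + v) by abel, h3, add_zero]
  refine ⟨_, ⟨?_, hsum ▸ hSA hu, ?_⟩, ?_⟩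
  · simp [insert_subset_iff, htA, hvA, (erase_subset u S).trans hSA]
  · have htu : ∑ x ∈ S, x ≠ u := fun h => htS (h ▸ hu)
    simp [hsum, huv, htu.symm]
  · rw [card_insert_of_notMem htS', card_insert_of_notMem hvS', ← card_erase_add_one hu]
    omega

theorem card_le_two_of_mem_of_mem (hfree : ZeroSumFree A) (hSA : S ⊆ A) {u v : G} (hu : u ∈ S)
    (hv : v ∈ S) (huv : u ≠ v) (ht : ∑ x ∈ S, x = u + v) : #S ≤ 2 := by
  classical
  have hv' : v ∈ S.erase u := mem_erase.2 ⟨huv.symm, hv⟩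
  have hrest : (S.erase u).erase v = ∅ :=
    hfree.eq_empty_of_sum_eq_zero ((erase_subset _ _).trans ((erase_subset _ _).trans hSA))
      (by rw [sum_erase_eq_sub hv', sum_erase_eq_sub hu, ht]; abel)
  have := card_erase_add_one hv'
  rw [hrest, card_empty, ← card_erase_add_one hu] at *
  omega

theorem exists_card_eq_three (h3 : ∀ x : G, x + x + x = 0) (hfree : ZeroSumFree A)
    (hsf : SumFull A) {u v : G} (hu : u ∈ A) (hv : v ∈ A) (ht : u + v ∈ A) :
    ∃ T, SumsOutside A T ∧ #T = 3 := by
  classical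
  obtain ⟨p, hp, q, hq, rfl⟩ := hsf u hu
  have htu : p + q + v ≠ p + q := hfree.left_ne_of_eq_add hv rfl
  have hpv : p ≠ v := by
    rintro rfl
    exact hfree.add_add_ne_zero h3 ht hu hq htu
      (by rw [show p + q + p + (p + q) + q = p + p + p + (q + q + q) by abel, h3, h3, add_zero])
  have hqv : q ≠ v := by
    rintro rfl
    exact hfree.add_add_ne_zero h3 ht hu hp htu
      (by rw [show p + q + q + (p + q) + p = p + p + p + (q + q + q) by abel, h3, h3, add_zero])
  have hpq := hfree.ne_of_eq_add h3 hu hp rfl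
  have htp : p + q + v ≠ p := fun h =>
    hfree.add_ne_zero h3 hq hv (add_eq_left.1 (by rwa [add_assoc] at h))
  have htq : p + q + v ≠ q := fun h =>
    hfree.add_ne_zero h3 hp hv (add_eq_left.1 (by rwa [add_comm p, add_assoc] at h))
  have htv : p + q + v ≠ v := hfree.right_ne_of_eq_add hu rfl
  have hsum : ∑ x ∈ {p, q, v}, x = p + q + v := by
    rw [sum_insert (by simp [hpq, hpv]), sum_pair hqv, add_assoc]
  refine ⟨{p, q, v}, ⟨?_, hsum ▸ ht, ?_⟩, card_eq_three.2 ⟨p, q, v, hpq, hpv, hqv, rfl⟩⟩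
  · simp [insert_subset_iff, hp, hq, hv]
  · simp [hsum, htp, htq, htv]

theorem exists_card_lt (h3 : ∀ x : G, x + x + x = 0) (hfree : ZeroSumFree A) (hsf : SumFull A)
    (hS : SumsOutside A S) : ∃ T, SumsOutside A T ∧ #S < #T := by
  obtain ⟨u, hu, v, hv, ht⟩ := hsf _ hS.2.1
  by_cases huS : u ∈ S <;> by_cases hvS : v ∈ S
  · obtain ⟨T, hT, hcard⟩ := hfree.exists_card_eq_three h3 hsf hu hv (ht ▸ hS.2.1)
    have := hfree.card_le_two_of_mem_of_mem hS.1 huS hvS (hfree.ne_of_eq_add h3 hS.2.1 hu ht) ht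
    exact ⟨T, hT, by omega⟩
  · exact hfree.exists_card_lt_of_mem_of_notMem h3 hS huS hv hvS ht
  · exact hfree.exists_card_lt_of_mem_of_notMem h3 hS hvS hu huS (ht.trans (add_comm u v))
  · exact ((hfree.mem_or_mem_of_sum_eq_add h3 hS hu hv ht).elim huS hvS).elim

theorem not_sumFull (h3 : ∀ x : G, x + x + x = 0) (hfree : ZeroSumFree A) (hA : A.Nonempty) :
    ¬ SumFull A := by
  classical
  intro hsf
  obtain ⟨a, ha⟩ := hA
  obtain ⟨b, hb, c, hc, rfl⟩ := hsf _ ha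
  obtain ⟨T, hT, -⟩ := hfree.exists_card_eq_three h3 hsf hb hc ha
  obtain ⟨S, hS, hmax⟩ := (A.powerset.filter (SumsOutside A)).exists_max_image card
    ⟨T, mem_filter.2 ⟨mem_powerset.2 hT.1, hT⟩⟩
  obtain ⟨U, hU, hlt⟩ := hfree.exists_card_lt h3 hsf (mem_filter.1 hS).2
  exact (hmax U (mem_filter.2 ⟨mem_powerset.2 hU.1, hU⟩)).not_gt hlt

end ZeroSumFree

end

/-- A finite nonempty sum-full subset of an elementary abelian 3-group is not
zero-sum-free. -/
theorem sumfull_not_zerosumfree_char3 {G : Type*} [AddCommGroup G]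
    (h3 : ∀ x : G, x + x + x = 0) (A : Finset G) (hA : A.Nonempty)
    (hsf : ∀ a ∈ A, ∃ b ∈ A, ∃ c ∈ A, a = b + c) :
    ∃ S ⊆ A, S.Nonempty ∧ ∑ x ∈ S, x = 0 := by
  by_contra hzero
  have hfree : ZeroSumFree A := fun S hS hne h => hzero ⟨S, hS, hne, h⟩
  exact hfree.not_sumFull h3 hA hsf
end

section
/- Let V be a finite-dimensional vector space over the field 𝔽_p with p prime, and let A be a finite sequence (multiset) of vectors in V with no nonempty subsequence summing to 0. Then the length of A is at most (p-1)·dim V. -/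
/-!
Chevalley–Warning. Fix a basis of `V` with coordinate functionals `φ_j` and consider the
`dim V` polynomials `f_j = ∑ᵢ φ_j(aᵢ) Xᵢ^(p-1)` in `n` variables, each of degree `p - 1`.
By Fermat, `xᵢ^(p-1)` is the indicator of `xᵢ ≠ 0`, so a common zero `x` of the `f_j` is exactly a
subset `{i | xᵢ ≠ 0}` whose sum vanishes. If `n > (p - 1) dim V`, Chevalley–Warning says the number
of common zeros is divisible by `p`; as `0` is one of them, there is a nonzero one, i.e. a
nonempty zero-sum subsequence.
-/

open MvPolynomial Finset

section ChevalleyWarning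

variable {K σ ι : Type*} [Field K] [Fintype K] [Fintype σ] [DecidableEq σ] [Fintype ι]

/-- **Chevalley's theorem**. -/
theorem MvPolynomial.exists_ne_zero_forall_eval_eq_zero {f : ι → MvPolynomial σ K}
    (hdeg : ∑ i, (f i).totalDegree < Fintype.card σ) (hf0 : ∀ i, eval 0 (f i) = 0) :
    ∃ x : σ → K, x ≠ 0 ∧ ∀ i, eval x (f i) = 0 := by
  classical
  obtain ⟨p, hchar⟩ := CharP.exists K
  have hp : p.Prime := CharP.char_is_prime K p
  have hdvd := char_dvd_card_solutions_of_fintype_sum_lt p hdeg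
  have hcard : 1 < Fintype.card { x : σ → K // ∀ i, eval x (f i) = 0 } :=
    hp.one_lt.trans_le (Nat.le_of_dvd (Fintype.card_pos_iff.mpr ⟨⟨0, hf0⟩⟩) hdvd)
  obtain ⟨⟨x, hx⟩, hne⟩ := Fintype.exists_ne_of_one_lt_card hcard ⟨0, hf0⟩
  exact ⟨x, fun h => hne (Subtype.ext h), hx⟩

end ChevalleyWarning

section SubsetSum

variable {K V ι : Type*} [Field K] [Fintype K] [AddCommGroup V] [Module K V] [Fintype ι]

local notation "q" => Fintype.card K

noncomputable def subsetSumPoly (φ : Module.Dual K V) (a : ι → V) : MvPolynomial ι K :=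
  ∑ i, C (φ (a i)) * X i ^ (q - 1)

theorem totalDegree_subsetSumPoly_le (φ : Module.Dual K V) (a : ι → V) :
    (subsetSumPoly φ a).totalDegree ≤ q - 1 := by
  refine (totalDegree_finsetSum _ _).trans (Finset.sup_le fun i _ => ?_)
  calc (C (φ (a i)) * X i ^ (q - 1)).totalDegree
      ≤ (C (φ (a i))).totalDegree + (X (R := K) i ^ (q - 1)).totalDegree := totalDegree_mul _ _
    _ ≤ 0 + (q - 1) * (X (R := K) i).totalDegree := by
        gcongr
        · exact (totalDegree_C _).le
        · exact totalDegree_pow _ _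
    _ = q - 1 := by simp [totalDegree_X]

theorem eval_subsetSumPoly [DecidableEq K] (φ : Module.Dual K V) (a : ι → V) (x : ι → K) :
    eval x (subsetSumPoly φ a) = φ (∑ i with x i ≠ 0, a i) := by
  have hq : q - 1 ≠ 0 := Nat.sub_ne_zero_of_lt Fintype.one_lt_card
  rw [Finset.sum_filter, map_sum, subsetSumPoly, map_sum]
  refine Finset.sum_congr rfl fun i _ => ?_
  simp only [eval_mul, eval_C, eval_pow, eval_X]
  split_ifs with hx
  · rw [FiniteField.pow_card_sub_one_eq_one _ hx, mul_one]
  · rw [not_not.mp hx, zero_pow hq, mul_zero, map_zero]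

theorem exists_nonempty_sum_eq_zero_of_finrank_lt [FiniteDimensional K V] (a : ι → V)
    (hlt : (q - 1) * Module.finrank K V < Fintype.card ι) :
    ∃ S : Finset ι, S.Nonempty ∧ ∑ i ∈ S, a i = 0 := by
  classical
  let b := Module.finBasis K V
  let f : Fin (Module.finrank K V) → MvPolynomial ι K := fun j => subsetSumPoly (b.coord j) a
  have hdeg : ∑ j, (f j).totalDegree < Fintype.card ι :=
    calc ∑ j, (f j).totalDegree ≤ ∑ _j : Fin (Module.finrank K V), (q - 1) :=
          Finset.sum_le_sum fun j _ => totalDegree_subsetSumPoly_le _ _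
      _ = (q - 1) * Module.finrank K V := by simp [mul_comm]
      _ < Fintype.card ι := hlt
  have hf0 : ∀ j, eval 0 (f j) = 0 := fun j => by
    rw [eval_subsetSumPoly]; simp
  obtain ⟨x, hx0, hx⟩ := exists_ne_zero_forall_eval_eq_zero hdeg hf0
  refine ⟨({i | x i ≠ 0} : Finset ι), ?_, b.forall_coord_eq_zero_iff.mp fun j => ?_⟩
  · obtain ⟨i, hi⟩ := Function.ne_iff.mp hx0
    exact ⟨i, by simpa using hi⟩
  · simpa [f, eval_subsetSumPoly] using hx j

end SubsetSum

/-- Olson's bound: a zero-sum-free sequence in a finite-dimensional `𝔽_p`-vector space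
has length at most `(p - 1) · dim V`. -/
theorem olson_bound {p : ℕ} [Fact p.Prime] {V : Type*} [AddCommGroup V]
    [Module (ZMod p) V] [FiniteDimensional (ZMod p) V] {n : ℕ} (a : Fin n → V)
    (hzsf : ∀ S : Finset (Fin n), S.Nonempty → ∑ i ∈ S, a i ≠ 0) :
    n ≤ (p - 1) * Module.finrank (ZMod p) V := by
  by_contra! hlt
  obtain ⟨S, hS, hsum⟩ := exists_nonempty_sum_eq_zero_of_finrank_lt (K := ZMod p) a
    (by simpa only [ZMod.card, Fintype.card_fin] using hlt)
  exact hzsf S hS hsum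
end

section
/- Let A be a finite nonempty subset of an elementary abelian 2-group (vector space over 𝔽₂) such that every element of A is a sum of two other elements of A. Then A contains a nonempty subset summing to 0. -/
/-! If `0 ∈ A`, then `{0}` is a zero-sum subset. Otherwise pick `a = b + c` in `A`: all three are
nonzero, which forces them to be pairwise distinct (`b = c` would give `a = 2b = 0`), and
`a + b + c = a + a = 0`. -/

section

variable {G : Type*} [AddCommGroup G]

lemma pairwise_ne_of_eq_add {a b c : G} (h2 : ∀ x : G, x + x = 0)
    (ha : a ≠ 0) (hb : b ≠ 0) (hc : c ≠ 0) (habc : a = b + c) :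
    a ≠ b ∧ a ≠ c ∧ b ≠ c := by
  refine ⟨fun hab => hc ?_, fun hac => hb ?_, fun hbc => ha ?_⟩
  · exact left_eq_add.mp (hab ▸ habc)
  · exact right_eq_add.mp (hac ▸ habc)
  · rw [habc, hbc, h2]

lemma exists_subset_sum_eq_zero_of_eq_add [DecidableEq G] (h2 : ∀ x : G, x + x = 0) {A : Finset G}
    (h0 : (0 : G) ∉ A) {a b c : G} (ha : a ∈ A) (hb : b ∈ A) (hc : c ∈ A) (habc : a = b + c) :
    ∃ S ⊆ A, S.Nonempty ∧ ∑ x ∈ S, x = 0 := by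
  have hne : ∀ x ∈ A, x ≠ 0 := fun x hx hx0 => h0 (hx0 ▸ hx)
  obtain ⟨hab, hac, hbc⟩ := pairwise_ne_of_eq_add h2 (hne a ha) (hne b hb) (hne c hc) habc
  refine ⟨{a, b, c}, ?_, Finset.insert_nonempty _ _, ?_⟩
  · simp only [Finset.insert_subset_iff, Finset.singleton_subset_iff]
    exact ⟨ha, hb, hc⟩
  · rw [Finset.sum_insert (by simp [hab, hac]), Finset.sum_pair hbc, ← habc, h2]

end

/-- A finite nonempty sum-full subset of an elementary abelian 2-group is not
zero-sum-free. -/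
theorem sumfull_not_zerosumfree_char2 {G : Type*} [AddCommGroup G]
    (h2 : ∀ x : G, x + x = 0) (A : Finset G) (hA : A.Nonempty)
    (hsf : ∀ a ∈ A, ∃ b ∈ A, ∃ c ∈ A, a = b + c) :
    ∃ S ⊆ A, S.Nonempty ∧ ∑ x ∈ S, x = 0 := by
  classical
  by_cases h0 : (0 : G) ∈ A
  · exact ⟨{0}, Finset.singleton_subset_iff.mpr h0, Finset.singleton_nonempty 0,
      Finset.sum_singleton id 0⟩
  obtain ⟨a, ha⟩ := hA
  obtain ⟨b, hb, c, hc, habc⟩ := hsf a ha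
  exact exists_subset_sum_eq_zero_of_eq_add h2 h0 ha hb hc habc
end

section
/- Let A be a finite, generating, sum-full subset of an abelian group G, and let H be a proper subgroup of G. If A is zero-sum-free, then there exists an infinite sequence a_1, a_2, … of elements of A \ H and a sequence b_1, b_2, … of elements of A with a_k = a_{k+1} + b_k for all k ≥ 1. -/
/-!
Since `A` generates `G` and `H ≠ G`, some element of `A` lies outside `H`. If `a ∉ H` and
`a = b + c` with `b, c ∈ A`, then `b ∉ H` or `c ∉ H`, as `H` is closed under addition; so every
element of `A \ H` is the sum of an element of `A \ H` and an element of `A`, and iterating this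
step gives the chain.
-/

theorem exists_seq_of_forall_exists {α : Type*} {p : α → Prop} {r : α → α → Prop}
    (h : ∀ x, p x → ∃ y, p y ∧ r x y) {x₀ : α} (hx₀ : p x₀) :
    ∃ f : ℕ → α, ∀ n, p (f n) ∧ r (f n) (f (n + 1)) := by
  choose g hg using fun x : {x // p x} => h x.1 x.2
  let step : {x // p x} → {x // p x} := fun x => ⟨g x, (hg x).1⟩
  refine ⟨fun n => (step^[n] ⟨x₀, hx₀⟩).1, fun n => ⟨(step^[n] _).2, ?_⟩⟩
  dsimp only
  rw [Function.iterate_succ_apply']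
  exact (hg _).2

@[to_additive]
theorem Subgroup.exists_mem_notMem_of_closure_eq_top {G : Type*} [Group G] {s : Set G}
    (hs : closure s = ⊤) {H : Subgroup G} (hH : H ≠ ⊤) : ∃ x ∈ s, x ∉ H := by
  by_contra! hsH
  exact hH (top_le_iff.mp (hs ▸ (closure_le H).mpr hsH))

section SumFull

variable {G : Type*} [AddCommGroup G]

def IsSumFull (A : Set G) : Prop :=
  ∀ a ∈ A, ∃ b ∈ A, ∃ c ∈ A, a = b + c

theorem IsSumFull.exists_notMem_sub_mem {A : Set G} (hA : IsSumFull A) (H : AddSubgroup G)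
    {a : G} (ha : a ∈ A) (haH : a ∉ H) : ∃ y ∈ A, y ∉ H ∧ a - y ∈ A := by
  obtain ⟨b, hb, c, hc, rfl⟩ := hA a ha
  by_cases hbH : b ∈ H
  · exact ⟨c, hc, fun hcH => haH (H.add_mem hbH hcH), by rwa [add_sub_cancel_right]⟩
  · exact ⟨b, hb, hbH, by rwa [add_sub_cancel_left]⟩

end SumFull

theorem exists_infinite_chain_general {G : Type*} [AddCommGroup G] (A : Finset G)
    (hgen : AddSubgroup.closure (A : Set G) = ⊤)
    (hsf : ∀ a ∈ A, ∃ b ∈ A, ∃ c ∈ A, a = b + c)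
    (H : AddSubgroup G) (hH : H ≠ ⊤) :
    ∃ a : ℕ → G, ∃ b : ℕ → G,
      (∀ k, a k ∈ A ∧ a k ∉ H) ∧ (∀ k, b k ∈ A) ∧
      ∀ k, a k = a (k + 1) + b k := by
  obtain ⟨a₀, ha₀A, ha₀H⟩ := AddSubgroup.exists_mem_notMem_of_closure_eq_top hgen hH
  have hstep : ∀ x, x ∈ A ∧ x ∉ H → ∃ y, (y ∈ A ∧ y ∉ H) ∧ x - y ∈ A := fun x ⟨hxA, hxH⟩ =>
    let ⟨y, hyA, hyH, hxy⟩ := IsSumFull.exists_notMem_sub_mem hsf H hxA hxH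
    ⟨y, ⟨hyA, hyH⟩, hxy⟩
  obtain ⟨a, ha⟩ := exists_seq_of_forall_exists hstep ⟨ha₀A, ha₀H⟩
  exact ⟨a, fun k => a k - a (k + 1), fun k => (ha k).1, fun k => (ha k).2,
    fun k => (add_sub_cancel _ _).symm⟩

/-- In a generating, sum-full, zero-sum-free finite set there is an infinite chain
`a_k = a_{k+1} + b_k` with all `a_k` outside a given proper subgroup. -/
theorem exists_infinite_chain {G : Type*} [AddCommGroup G] (A : Finset G)
    (hgen : AddSubgroup.closure (A : Set G) = ⊤)
    (hsf : ∀ a ∈ A, ∃ b ∈ A, ∃ c ∈ A, a = b + c)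
    (H : AddSubgroup G) (hH : H ≠ ⊤)
    (hzsf : ∀ S ⊆ A, S.Nonempty → ∑ x ∈ S, x ≠ 0) :
    ∃ a : ℕ → G, ∃ b : ℕ → G,
      (∀ k, a k ∈ A ∧ a k ∉ H) ∧ (∀ k, b k ∈ A) ∧
      ∀ k, a k = a (k + 1) + b k :=
  exists_infinite_chain_general A hgen hsf H hH
end

section
/- There exists an infinite set A of integers such that every element of A is a sum of two other elements of A, and no finite nonempty subset of A has sum 0. -/
/-!
The set `{1, -2, 3, -5, 8, -13, …}` of signed Fibonacci numbers `(-1)ⁿ Fₙ₊₂` works: each term is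
the sum of the next two. For zero-sum-freeness, look at the term of largest index `t` in a finite
subset: the terms of smaller index with the opposite sign add up in absolute value to at most
`Fₜ₊₁ + Fₜ₋₁ + ⋯ = Fₜ₊₂ - 1`, so they cannot cancel it and the sum has the sign of `(-1)ᵗ`.
-/

open Finset

def altFib (n : ℕ) : ℤ := (-1) ^ n * Nat.fib (n + 2)

lemma altFib_eq_add (n : ℕ) : altFib n = altFib (n + 1) + altFib (n + 2) := by
  have hfib : (Nat.fib (n + 4) : ℤ) = Nat.fib (n + 2) + Nat.fib (n + 3) := by
    exact_mod_cast Nat.fib_add_two (n := n + 2)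
  simp only [altFib, hfib]
  ring

lemma altFib_injective : Function.Injective altFib := fun m n h =>
  Nat.fib_add_two_strictMono.injective <| by simpa [altFib, Int.natAbs_mul] using congrArg Int.natAbs h

lemma neg_one_pow_mul_sum_altFib_mem_Icc (T : Finset ℕ) (t : ℕ) :
    (-1) ^ t * ∑ n ∈ range t ∩ T, altFib n ∈
      Set.Icc (1 - Nat.fib (t + 2) : ℤ) (Nat.fib (t + 1) - 1) := by
  induction t with
  | zero => simp
  | succ t ih =>
    have hsq : ((-1 : ℤ) ^ t) * (-1) ^ t = 1 := by rw [← mul_pow]; norm_num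
    have hfib : (Nat.fib (t + 3) : ℤ) = Nat.fib (t + 1) + Nat.fib (t + 2) := by
      exact_mod_cast Nat.fib_add_two (n := t + 1)
    rw [← sum_ite_mem, sum_range_succ, sum_ite_mem]
    obtain ⟨ih_lower, ih_upper⟩ := ih
    set s := ∑ n ∈ range t ∩ T, altFib n
    split_ifs
    · have hstep : (-1) ^ (t + 1) * (s + altFib t) = -((-1) ^ t * s) - Nat.fib (t + 2) := by
        unfold altFib
        linear_combination (-(Nat.fib (t + 2) : ℤ)) * hsq
      rw [hstep]
      constructor <;> linarith
    · rw [add_zero, pow_succ, mul_neg_one, neg_mul]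
      constructor <;> linarith

lemma sum_altFib_ne_zero {T : Finset ℕ} (hT : T.Nonempty) : ∑ n ∈ T, altFib n ≠ 0 := by
  set t := T.max' hT
  have hsplit : ∑ n ∈ T, altFib n = ∑ n ∈ range t ∩ T, altFib n + altFib t := by
    have hsub : T ⊆ range (t + 1) := fun n hn => mem_range_succ_iff.mpr (T.le_max' n hn)
    calc ∑ n ∈ T, altFib n = ∑ n ∈ range (t + 1), if n ∈ T then altFib n else 0 := by
          rw [sum_ite_mem, inter_eq_right.mpr hsub]
      _ = ∑ n ∈ range t ∩ T, altFib n + altFib t := by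
          rw [sum_range_succ, sum_ite_mem, if_pos (T.max'_mem hT)]
  have hsq : ((-1 : ℤ) ^ t) * (-1) ^ t = 1 := by rw [← mul_pow]; norm_num
  have hlower := (neg_one_pow_mul_sum_altFib_mem_Icc T t).1
  have hpos : 1 ≤ (-1) ^ t * ∑ n ∈ T, altFib n := by
    rw [hsplit, mul_add, altFib, ← mul_assoc, hsq, one_mul]
    linarith
  intro h
  simp [h] at hpos

/-- EGMO 2012 Problem 4: there is an infinite sum-full zero-sum-free set of integers. -/
theorem exists_infinite_sumfull_zerosumfree :
    ∃ A : Set ℤ, A.Infinite ∧ (∀ a ∈ A, ∃ b ∈ A, ∃ c ∈ A, a = b + c) ∧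
      ∀ S : Finset ℤ, ↑S ⊆ A → S.Nonempty → ∑ x ∈ S, x ≠ 0 := by
  refine ⟨Set.range altFib, Set.infinite_range_of_injective altFib_injective, ?_, ?_⟩
  · rintro _ ⟨n, rfl⟩
    exact ⟨_, ⟨n + 1, rfl⟩, _, ⟨n + 2, rfl⟩, altFib_eq_add n⟩
  · intro S hS hne
    rw [← Set.image_univ, subset_set_image_iff] at hS
    obtain ⟨T, -, rfl⟩ := hS
    rw [sum_image altFib_injective.injOn]
    exact sum_altFib_ne_zero (image_nonempty.mp hne)
end
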